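/- Let p ∈ ℝ^K be a probability vector with p_k > 0 for all k, and consider a gradient-ascent-style update on logits s with p = softmax(s): for the negative-gradient update s' = s + η(p - e_y) with η > 0 applied to class y, the probability of class y strictly decreases: softmax(s')_y < p_y. -/

import Mathlib

noncomputable def softmax {K : ℕ} (s : Fin K → ℝ) (k : Fin K) : ℝ :=
  Real.exp (s k) / ∑ j, Real.exp (s j)

/-! A negative-gradient step adds `d = η (p - e_y)` to the logits. Every coordinate of `d` is at
least `d y = η (p_y - 1)`, strictly so off `y` because `p_j > 0 ≥ p_y - 1`. Raising the other
logits at least as much as the `y`-th, and one of them strictly more, lowers the share of `y`. -/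

lemma sum_exp_pos {K : ℕ} (s : Fin K → ℝ) (y : Fin K) : 0 < ∑ j, Real.exp (s j) :=
  Finset.sum_pos (fun j _ => Real.exp_pos (s j)) ⟨y, Finset.mem_univ y⟩

lemma softmax_pos {K : ℕ} (s : Fin K → ℝ) (k : Fin K) : 0 < softmax s k :=
  div_pos (Real.exp_pos (s k)) (sum_exp_pos s k)

lemma softmax_le_one {K : ℕ} (s : Fin K → ℝ) (k : Fin K) : softmax s k ≤ 1 :=
  (div_le_one (sum_exp_pos s k)).2 <|
    Finset.single_le_sum (fun j _ => (Real.exp_pos (s j)).le) (Finset.mem_univ k)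

lemma softmax_add_lt {K : ℕ} (s d : Fin K → ℝ) (y : Fin K)
    (hle : ∀ j, d y ≤ d j) (hlt : ∃ j, d y < d j) :
    softmax (fun k => s k + d k) y < softmax s y := by
  obtain ⟨j₀, hj₀⟩ := hlt
  have hsum : Real.exp (d y) * ∑ j, Real.exp (s j) < ∑ j, Real.exp (s j + d j) := by
    rw [Finset.mul_sum]
    refine Finset.sum_lt_sum (fun j _ => ?_) ⟨j₀, Finset.mem_univ j₀, ?_⟩
    · rw [← Real.exp_add, add_comm]
      gcongr
      exact hle j
    · rw [← Real.exp_add, add_comm]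
      gcongr
  calc softmax (fun k => s k + d k) y
      = Real.exp (s y) * Real.exp (d y) / ∑ j, Real.exp (s j + d j) := by
        rw [softmax, Real.exp_add]
    _ < Real.exp (s y) * Real.exp (d y) / (Real.exp (d y) * ∑ j, Real.exp (s j)) :=
        div_lt_div_of_pos_left (by positivity)
          (mul_pos (Real.exp_pos _) (sum_exp_pos s y)) hsum
    _ = softmax s y := by
        rw [softmax, mul_comm (Real.exp (d y)), mul_div_mul_right _ _ (Real.exp_pos _).ne']

theorem negative_gradient_decreases_target {K : ℕ} (hK : 1 < K)
    (s : Fin K → ℝ) (y : Fin K) (η : ℝ) (hη : 0 < η) :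
    softmax (fun k => s k + η * (softmax s k - if k = y then 1 else 0)) y
      < softmax s y := by
  have : Nontrivial (Fin K) := Fin.nontrivial_iff_two_le.2 hK
  obtain ⟨j₀, hj₀⟩ := exists_ne y
  have hgap : ∀ j, softmax s y - 1 < softmax s j - 0 := fun j => by
    linarith [softmax_le_one s y, softmax_pos s j]
  refine softmax_add_lt s _ y (fun j => ?_) ⟨j₀, ?_⟩
  · rcases eq_or_ne j y with rfl | hj
    · exact le_rfl
    · rw [if_pos rfl, if_neg hj]
      exact mul_le_mul_of_nonneg_left (hgap j).le hη.le
  · rw [if_pos rfl, if_neg hj₀]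
    exact mul_lt_mul_of_pos_left (hgap j₀) hη
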